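/- Suppose D = ℍ[K,a,π] with a ∈ O_K^× is a division ring. Then every nonzero element u ∈ D with τ_y(u) = -u satisfies ν_K(Nrd(u)) odd, i.e. ν_D(u) ∈ 1/2 + ℤ. In particular no (-1)-symmetric element of (D, τ_y) is a unit of O_D, so every skew-hermitian form over (D, τ_y) is ramified. -/

import Mathlib

noncomputable section

/-- A surjective discrete valuation `ν : K → ℤ` on a field `K`
(the value of `ν` at `0` is irrelevant: only nonzero elements are constrained). -/
structure DVal (K : Type) [Field K] : Type where
  ν : K → ℤ
  ν_mul : ∀ x y : K, x ≠ 0 → y ≠ 0 → ν (x * y) = ν x + ν y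
  ν_add : ∀ x y : K, x ≠ 0 → y ≠ 0 → x + y ≠ 0 → min (ν x) (ν y) ≤ ν (x + y)
  ν_one : ν 1 = 0
  ν_surj : ∀ n : ℤ, ∃ x : K, x ≠ 0 ∧ ν x = n

namespace DVal

variable {K : Type} [Field K]

/-- `x` belongs to the valuation ring `O_K`. -/
def Int (V : DVal K) (x : K) : Prop := x = 0 ∨ 0 ≤ V.ν x

/-- `x` is a unit of the valuation ring `O_K`. -/
def IntUnit (V : DVal K) (x : K) : Prop := x ≠ 0 ∧ V.ν x = 0

/-- `x` belongs to the maximal ideal `m_K` of the valuation ring `O_K`. -/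
def MaxIdeal (V : DVal K) (x : K) : Prop := x = 0 ∨ 1 ≤ V.ν x

/-- `K` is complete with respect to the valuation `ν`: every Cauchy sequence converges. -/
def IsComplete (V : DVal K) : Prop :=
  ∀ f : ℕ → K,
    (∀ M : ℤ, ∃ N : ℕ, ∀ m n : ℕ, N ≤ m → N ≤ n →
      f m - f n = 0 ∨ M ≤ V.ν (f m - f n)) →
    ∃ L : K, ∀ M : ℤ, ∃ N : ℕ, ∀ n : ℕ, N ≤ n →
      f n - L = 0 ∨ M ≤ V.ν (f n - L)

/-- The residue field `k = O_K/m_K` has characteristic different from `2`,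
i.e. `2` is a unit of the valuation ring `O_K`. -/
def ResCharNeTwo (V : DVal K) : Prop := (2 : K) ≠ 0 ∧ V.ν 2 = 0

end DVal

/-- The reduced norm of a quaternion `u = δ + αx + βy + γz ∈ ℍ[K,a,b]`:
`Nrd u = u·τ(u) = δ² - aα² - bβ² + abγ²`. -/
def qnrd {K : Type} [Field K] (a b : K) (u : QuaternionAlgebra K a 0 b) : K :=
  u.re ^ 2 - a * u.imI ^ 2 - b * u.imJ ^ 2 + a * b * u.imK ^ 2

/-- The canonical involution `τ(δ + αx + βy + γz) = δ - αx - βy - γz` of `ℍ[K,a,b]`. -/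
def qtau {K : Type} [Field K] {a b : K} (u : QuaternionAlgebra K a 0 b) :
    QuaternionAlgebra K a 0 b :=
  ⟨u.re, -u.imI, -u.imJ, -u.imK⟩

/-- The norm form `⟨1,-a,-b,ab⟩` of `ℍ[K,a,b]` is anisotropic over `K`
(equivalently, `ℍ[K,a,b]` is a division ring). -/
def QAniso {K : Type} [Field K] (a b : K) : Prop :=
  ∀ d e f g : K, d ^ 2 - a * e ^ 2 - b * f ^ 2 + a * b * g ^ 2 = 0 →
    d = 0 ∧ e = 0 ∧ f = 0 ∧ g = 0

/-- The valuation `ν_D(u) = (1/2)·ν_K(Nrd u)` of the quaternion division algebra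
`D = ℍ[K,a,b]` (at nonzero `u`). -/
def qnu {K : Type} [Field K] (V : DVal K) (a b : K) (u : QuaternionAlgebra K a 0 b) : ℚ :=
  (V.ν (qnrd a b u) : ℚ) / 2

/-! Since `λ⁻¹·y = 1`, the condition `τ_y(u) = -u` says `y·τ(u) = -u·y`. Comparing coordinates,
this forces `u = βy` when `2` and `ϖ` are invertible, so `Nrd(u) = -ϖβ²` has valuation
`1 + 2·ν(β)`, which is odd. -/

namespace DVal

variable {K : Type} [Field K] (V : DVal K)

theorem ν_neg_one : V.ν (-1) = 0 := by
  have h := V.ν_mul (-1) (-1) (by norm_num) (by norm_num)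
  rw [neg_mul_neg, one_mul, V.ν_one] at h
  omega

theorem ν_neg {x : K} (hx : x ≠ 0) : V.ν (-x) = V.ν x := by
  rw [← neg_one_mul, V.ν_mul _ _ (by norm_num) hx, ν_neg_one, zero_add]

end DVal

section Quaternion

variable {K : Type} [Field K] {a b : K}

theorem qnrd_mk_imJ (β : K) : qnrd a b ⟨0, 0, β, 0⟩ = -(b * β ^ 2) := by
  simp only [qnrd]
  ring

theorem eq_mk_imJ_of_j_mul_qtau_eq_neg_mul_j (h2 : (2 : K) ≠ 0) (hb : b ≠ 0)
    {u : QuaternionAlgebra K a 0 b}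
    (hu : ⟨0, 0, 1, 0⟩ * qtau u = -u * ⟨0, 0, 1, 0⟩) : u = ⟨0, 0, u.imJ, 0⟩ := by
  have hre := congrArg QuaternionAlgebra.imJ hu
  have himI := congrArg QuaternionAlgebra.imK hu
  have himK := congrArg QuaternionAlgebra.imI hu
  simp only [qtau, QuaternionAlgebra.imJ_mul, QuaternionAlgebra.imK_mul,
    QuaternionAlgebra.imI_mul, QuaternionAlgebra.re_neg, QuaternionAlgebra.imI_neg,
    QuaternionAlgebra.imJ_neg, QuaternionAlgebra.imK_neg] at hre himI himK
  have hre0 : 2 * u.re = 0 := by linear_combination hre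
  have himI0 : 2 * u.imI = 0 := by linear_combination himI
  have himK0 : (2 * b) * u.imK = 0 := by linear_combination himK
  ext
  · exact (mul_eq_zero.1 hre0).resolve_left h2
  · exact (mul_eq_zero.1 himI0).resolve_left h2
  · rfl
  · exact (mul_eq_zero.1 himK0).resolve_left (mul_ne_zero h2 hb)

theorem ν_qnrd_mk_imJ (V : DVal K) (hb : b ≠ 0) {β : K} (hβ : β ≠ 0) :
    V.ν (qnrd a b ⟨0, 0, β, 0⟩) = V.ν b + 2 * V.ν β := by
  have hβ2 : β ^ 2 ≠ 0 := pow_ne_zero 2 hβ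
  rw [qnrd_mk_imJ, V.ν_neg (mul_ne_zero hb hβ2), V.ν_mul _ _ hb hβ2, sq, V.ν_mul _ _ hβ hβ]
  ring

theorem qnu_eq_add_half_of_odd (V : DVal K) {u : QuaternionAlgebra K a 0 b}
    (h : Odd (V.ν (qnrd a b u))) : ∃ n : ℤ, qnu V a b u = (n : ℚ) + 1 / 2 := by
  obtain ⟨n, hn⟩ := h
  refine ⟨n, ?_⟩
  rw [qnu, hn]
  push_cast
  ring

theorem qnu_ne_zero_of_odd (V : DVal K) {u : QuaternionAlgebra K a 0 b}
    (h : Odd (V.ν (qnrd a b u))) : qnu V a b u ≠ 0 := by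
  rw [qnu, div_ne_zero_iff, Int.cast_ne_zero]
  refine ⟨?_, two_ne_zero⟩
  obtain ⟨n, hn⟩ := h
  omega

end Quaternion

theorem stmt_18_general (K : Type) [Field K] (V : DVal K)
    -- K is complete with residue field of characteristic ≠ 2
    (hchar : V.ResCharNeTwo)
    -- D = ℍ[K,a,ϖ] with a ∈ O_K^×, ϖ a uniformizer, D a division ring
    (a ϖ : K) (hϖ0 : ϖ ≠ 0) (hvϖ : V.ν ϖ = 1)
    -- σ = τ_y (μ = λ⁻¹)
    (mu : QuaternionAlgebra K a 0 ϖ)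
    (hmu' : mu * (⟨0, 0, 1, 0⟩ : QuaternionAlgebra K a 0 ϖ) = 1)
    (σ : QuaternionAlgebra K a 0 ϖ → QuaternionAlgebra K a 0 ϖ)
    (hσ : ∀ u, σ u = (⟨0, 0, 1, 0⟩ : QuaternionAlgebra K a 0 ϖ) * qtau u * mu)
 :
    ∀ u : QuaternionAlgebra K a 0 ϖ, u ≠ 0 → σ u = -u →
      Odd (V.ν (qnrd a ϖ u)) ∧
        (∃ n : ℤ, qnu V a ϖ u = (n : ℚ) + 1 / 2) ∧
        qnu V a ϖ u ≠ 0 := by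
  intro u hu hσu
  have hskew : ⟨0, 0, 1, 0⟩ * qtau u = -u * ⟨0, 0, 1, 0⟩ := by
    rw [← hσu, hσ, mul_assoc _ mu, hmu', mul_one]
  have hu_eq := eq_mk_imJ_of_j_mul_qtau_eq_neg_mul_j hchar.1 hϖ0 hskew
  have hβ : u.imJ ≠ 0 := by
    intro h
    exact hu (by rw [hu_eq, h]; rfl)
  have hodd : Odd (V.ν (qnrd a ϖ u)) := by
    rw [hu_eq, ν_qnrd_mk_imJ V hϖ0 hβ, hvϖ]
    exact ⟨V.ν u.imJ, by ring⟩
  exact ⟨hodd, qnu_eq_add_half_of_odd V hodd, qnu_ne_zero_of_odd V hodd⟩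

/-- every nonzero `(-1)`-symmetric element of `(ℍ[K,a,ϖ], τ_y)` has
`ν_K(Nrd u)` odd, i.e. `ν_D(u) ∈ 1/2 + ℤ`; in particular it is not a unit of `O_D`, so every
skew-hermitian form over `(D, τ_y)` is ramified. -/
theorem stmt_18 (K : Type) [Field K] (V : DVal K)
    -- K is complete with residue field of characteristic ≠ 2
    (hcomp : V.IsComplete) (hchar : V.ResCharNeTwo)
    -- D = ℍ[K,a,ϖ] with a ∈ O_K^×, ϖ a uniformizer, D a division ring
    (a ϖ : K) (ha0 : a ≠ 0) (hva : V.ν a = 0) (hϖ0 : ϖ ≠ 0) (hvϖ : V.ν ϖ = 1)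
    (haniso : QAniso a ϖ)
    -- σ = τ_y (μ = λ⁻¹)
    (mu : QuaternionAlgebra K a 0 ϖ)
    (hmu : (⟨0, 0, 1, 0⟩ : QuaternionAlgebra K a 0 ϖ) * mu = 1) (hmu' : mu * (⟨0, 0, 1, 0⟩ : QuaternionAlgebra K a 0 ϖ) = 1)
    (σ : QuaternionAlgebra K a 0 ϖ → QuaternionAlgebra K a 0 ϖ)
    (hσ : ∀ u, σ u = (⟨0, 0, 1, 0⟩ : QuaternionAlgebra K a 0 ϖ) * qtau u * mu)
 :
    ∀ u : QuaternionAlgebra K a 0 ϖ, u ≠ 0 → σ u = -u →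
      Odd (V.ν (qnrd a ϖ u)) ∧
        (∃ n : ℤ, qnu V a ϖ u = (n : ℚ) + 1 / 2) ∧
        qnu V a ϖ u ≠ 0 :=
  stmt_18_general K V hchar a ϖ hϖ0 hvϖ mu hmu' σ hσ
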